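/- arXiv:2603.25596 — 5 statements merged into one kernel-verified Lean document; each statement's English description precedes it below -/
import Mathlib

section
/- Let M be a real d×d matrix, and let Q, P be complex d×d matrices. Define the real 2d×2d matrix Y with blocks [Re Q, Im Q; Re P, Im P] and the matrix Y_M with blocks [Re Q, Im Q; Re P − M·Re Q, Im P − M·Im Q]. Then Y is symplectic (i.e. Yᵀ Ω Y = Ω, where Ω = [0, I; −I, 0]) if and only if Y_Mᵀ · [M − Mᵀ, I; −I, 0] · Y_M = Ω. -/
open Matrix

lemma magnetic_key {d : ℕ} (M A B C D : Matrix (Fin d) (Fin d) ℝ) :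
    (Matrix.fromBlocks A B (C - M * A) (D - M * B))ᵀ *
      Matrix.fromBlocks (M - Mᵀ) 1 (-1) 0 *
      Matrix.fromBlocks A B (C - M * A) (D - M * B) =
    (Matrix.fromBlocks A B C D)ᵀ * Matrix.fromBlocks 0 1 (-1) 0 *
      Matrix.fromBlocks A B C D := by
  simp only [Matrix.fromBlocks_transpose, Matrix.fromBlocks_multiply,
    Matrix.transpose_sub, Matrix.transpose_mul, Matrix.mul_sub, Matrix.sub_mul,
    Matrix.mul_one, Matrix.one_mul, Matrix.mul_zero, Matrix.zero_mul,
    Matrix.mul_neg, Matrix.neg_mul, Matrix.mul_assoc]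
  congr 1 <;> noncomm_ring

/-- `Y` is symplectic iff `Y_M` satisfies the magnetic symplecticity
condition with structure matrix `[M - Mᵀ, I; -I, 0]`. -/
theorem stmt_0 (d : ℕ) (M : Matrix (Fin d) (Fin d) ℝ) (Q P : Matrix (Fin d) (Fin d) ℂ) :
    (Matrix.fromBlocks (Q.map Complex.re) (Q.map Complex.im)
        (P.map Complex.re) (P.map Complex.im))ᵀ *
      Matrix.fromBlocks 0 1 (-1) 0 *
      Matrix.fromBlocks (Q.map Complex.re) (Q.map Complex.im)
        (P.map Complex.re) (P.map Complex.im) =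
      Matrix.fromBlocks 0 1 (-1) 0 ↔
    (Matrix.fromBlocks (Q.map Complex.re) (Q.map Complex.im)
        (P.map Complex.re - M * Q.map Complex.re) (P.map Complex.im - M * Q.map Complex.im))ᵀ *
      Matrix.fromBlocks (M - Mᵀ) 1 (-1) 0 *
      Matrix.fromBlocks (Q.map Complex.re) (Q.map Complex.im)
        (P.map Complex.re - M * Q.map Complex.re) (P.map Complex.im - M * Q.map Complex.im) =
      Matrix.fromBlocks 0 1 (-1) 0 := by
  rw [magnetic_key]
end

section
/- Let B be a real skew-symmetric d×d matrix, H a real symmetric d×d matrix, τ > 0 with I + (τ/2)B invertible, and R = (I + (τ/2)B)⁻¹(I − (τ/2)B). Define Φ as the product of the three 2d×2d block matrices [I, 0; −(τ/2)H, I] · [I, 0; 0, R] · [I, 0; −(τ/2)H, I], and Ω_kin = [B, I + (τ/2)B; −I + (τ/2)B, 0]. Then Φᵀ · Ω_kin · Φ = [B, I − (τ/2)B; −I − (τ/2)B, 0]. -/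
open Matrix

lemma tl_key {R : Type*} [Ring R] (bb K A A' C C' : R) (hA : A * A' = 1)
    (hC' : C' * C = 1) (h2 : A + C = 2) :
    bb + (K + K * (A * C')) * (-C) + A * (K + A' * C * K) = bb := by
  have h1 : K * (A * C') * (-C) = -(K * A) := by
    rw [mul_assoc, mul_assoc, mul_neg, hC', mul_neg_one, mul_neg]
  have h3 : A * (A' * C * K) = C * K := by
    rw [← mul_assoc, ← mul_assoc, hA, one_mul]
  have h4 : K * A + K * C = A * K + C * K := by
    have h : K * (A + C) = (A + C) * K := by rw [h2, mul_two, two_mul]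
    simpa [mul_add, add_mul] using h
  rw [add_mul, mul_add, h1, h3, mul_neg, ← h4]
  abel

/-- The potential–magnetic–potential sandwich `Φ` maps
`Ω_kin = [B, I + (τ/2)B; −I + (τ/2)B, 0]` to `[B, I − (τ/2)B; −I − (τ/2)B, 0]`. -/
theorem stmt_3 (d : ℕ) (B H : Matrix (Fin d) (Fin d) ℝ) (hB : Bᵀ = -B) (hH : Hᵀ = H)
    (τ : ℝ) (hτ : 0 < τ) (hinv : IsUnit (1 + (τ / 2) • B)) :
    (Matrix.fromBlocks 1 0 (-(τ / 2) • H) 1 *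
        Matrix.fromBlocks 1 0 0 ((1 + (τ / 2) • B)⁻¹ * (1 - (τ / 2) • B)) *
        Matrix.fromBlocks 1 0 (-(τ / 2) • H) 1)ᵀ *
      Matrix.fromBlocks B (1 + (τ / 2) • B) (-1 + (τ / 2) • B) 0 *
      (Matrix.fromBlocks 1 0 (-(τ / 2) • H) 1 *
        Matrix.fromBlocks 1 0 0 ((1 + (τ / 2) • B)⁻¹ * (1 - (τ / 2) • B)) *
        Matrix.fromBlocks 1 0 (-(τ / 2) • H) 1) =
    Matrix.fromBlocks B (1 - (τ / 2) • B) (-1 - (τ / 2) • B) 0 := by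
  set A : Matrix (Fin d) (Fin d) ℝ := 1 + (τ / 2) • B with hAdef
  set C : Matrix (Fin d) (Fin d) ℝ := 1 - (τ / 2) • B with hCdef
  set K : Matrix (Fin d) (Fin d) ℝ := -(τ / 2) • H with hKdef
  have hAt : Aᵀ = C := by
    rw [hAdef, hCdef, transpose_add, transpose_smul, hB, transpose_one, smul_neg,
      ← sub_eq_add_neg]
  have hCt : Cᵀ = A := by
    rw [hAdef, hCdef, transpose_sub, transpose_smul, hB, transpose_one, smul_neg,
      sub_neg_eq_add]
  have hKt : Kᵀ = K := by rw [hKdef, transpose_smul, hH]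
  have hAdet : IsUnit A.det := (Matrix.isUnit_iff_isUnit_det A).mp hinv
  have hCdet : IsUnit C.det := by
    have h : C.det = A.det := by rw [← hAt, Matrix.det_transpose]
    rw [h]; exact hAdet
  have hAA' : A * A⁻¹ = 1 := Matrix.mul_nonsing_inv A hAdet
  have hC'C : C⁻¹ * C = 1 := Matrix.nonsing_inv_mul C hCdet
  have hAinvT : (A⁻¹)ᵀ = C⁻¹ := by rw [Matrix.transpose_nonsing_inv, hAt]
  have h2 : A + C = 2 := by
    have h : A + C = 1 + 1 := by rw [hAdef, hCdef]; abel
    rw [h, one_add_one_eq_two]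
  have hD : (-1 : Matrix (Fin d) (Fin d) ℝ) + (τ / 2) • B = -C := by rw [hCdef]; abel
  have hRHSbl : (-1 : Matrix (Fin d) (Fin d) ℝ) - (τ / 2) • B = -A := by rw [hAdef]; abel
  have hTR : A * (A⁻¹ * C) = C := by rw [← mul_assoc, hAA', one_mul]
  have hBL : A * C⁻¹ * (-C) = -A := by rw [mul_assoc, mul_neg, hC'C, mul_neg_one]
  simp only [Matrix.fromBlocks_multiply, Matrix.fromBlocks_transpose, Matrix.transpose_one,
    Matrix.transpose_zero, Matrix.mul_one, Matrix.one_mul, Matrix.mul_zero, Matrix.zero_mul,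
    add_zero, zero_add, Matrix.transpose_mul, Matrix.transpose_add, hD, hRHSbl, hKt, hCt,
    hAinvT, hTR, hBL, mul_assoc]
  exact congrArg (fun X => Matrix.fromBlocks X C (-A) (0 : Matrix (Fin d) (Fin d) ℝ))
    (by
      have := tl_key B K A A⁻¹ C C⁻¹ hAA' hC'C h2
      simpa [mul_assoc] using this)
end

section
/- Let B be a real skew-symmetric d×d matrix, H a real symmetric d×d matrix, τ > 0 with I + (τ/2)B invertible. Define the Boris splitting one-step matrix Ψ = K · Φ · K where K = [I, (τ/2)I; 0, I] and Φ = [I, 0; −(τ/2)H, I]·[I, 0; 0, R]·[I, 0; −(τ/2)H, I] with R the Cayley transform of (τ/2)B. Then Ψᵀ · Ω_B(τ) · Ψ = Ω_B(τ), where Ω_B(τ) = [B, I; −I, −(τ²/4)B]. In other words, the Boris splitting step with linear vector potential preserves the modified structure matrix Ω_B(τ). -/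
set_option maxHeartbeats 2000000

open Matrix

section Helpers
variable {d : ℕ}

lemma comm_nonsing_inv (X Y : Matrix (Fin d) (Fin d) ℝ) (h : IsUnit X.det)
    (hc : Y * X = X * Y) : Y * X⁻¹ = X⁻¹ * Y := by
  calc Y * X⁻¹ = 1 * (Y * X⁻¹) := (one_mul _).symm
    _ = X⁻¹ * X * (Y * X⁻¹) := by rw [Matrix.nonsing_inv_mul X h]
    _ = X⁻¹ * (X * (Y * X⁻¹)) := mul_assoc _ _ _
    _ = X⁻¹ * (Y * (X * X⁻¹)) := by rw [← mul_assoc X Y, ← hc, mul_assoc]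
    _ = X⁻¹ * Y := by rw [Matrix.mul_nonsing_inv X h, mul_one]
end Helpers

lemma boris_aux (d : ℕ) (B H R : Matrix (Fin d) (Fin d) ℝ)
    (hB : Bᵀ = -B) (hH : Hᵀ = H) (s t q : ℝ)
    (hs : s ≠ 0) (hq : q = s * s) (ht : t = s⁻¹)
    (hBR : ∀ X : Matrix (Fin d) (Fin d) ℝ, B * (R * X) = t • X - B * X - t • (R * X))
    (hBR0 : B * R = t • (1 : Matrix (Fin d) (Fin d) ℝ) - B - t • R)
    (hRB : ∀ X : Matrix (Fin d) (Fin d) ℝ, R * (B * X) = t • X - B * X - t • (R * X))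
    (hRB0 : R * B = t • (1 : Matrix (Fin d) (Fin d) ℝ) - B - t • R)
    (hBR' : ∀ X : Matrix (Fin d) (Fin d) ℝ, B * (Rᵀ * X) = t • (Rᵀ * X) - t • X - B * X)
    (hBR'0 : B * Rᵀ = t • Rᵀ - t • (1 : Matrix (Fin d) (Fin d) ℝ) - B)
    (hR'B : ∀ X : Matrix (Fin d) (Fin d) ℝ, Rᵀ * (B * X) = t • (Rᵀ * X) - t • X - B * X)
    (hR'B0 : Rᵀ * B = t • Rᵀ - t • (1 : Matrix (Fin d) (Fin d) ℝ) - B)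
    (hR'R : ∀ X : Matrix (Fin d) (Fin d) ℝ, Rᵀ * (R * X) = X)
    (hR'R0 : Rᵀ * R = 1)
    (hRR' : ∀ X : Matrix (Fin d) (Fin d) ℝ, R * (Rᵀ * X) = X)
    (hRR'0 : R * Rᵀ = 1)
    :
    (Matrix.fromBlocks 1 (s • (1 : Matrix (Fin d) (Fin d) ℝ)) 0 1 *
        (Matrix.fromBlocks 1 0 ((-s) • H) 1 *
          Matrix.fromBlocks 1 0 0 R *
          Matrix.fromBlocks 1 0 ((-s) • H) 1) *
        Matrix.fromBlocks 1 (s • (1 : Matrix (Fin d) (Fin d) ℝ)) 0 1)ᵀ *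
      Matrix.fromBlocks B 1 (-1) (-(q • B)) *
      (Matrix.fromBlocks 1 (s • (1 : Matrix (Fin d) (Fin d) ℝ)) 0 1 *
        (Matrix.fromBlocks 1 0 ((-s) • H) 1 *
          Matrix.fromBlocks 1 0 0 R *
          Matrix.fromBlocks 1 0 ((-s) • H) 1) *
        Matrix.fromBlocks 1 (s • (1 : Matrix (Fin d) (Fin d) ℝ)) 0 1) =
    Matrix.fromBlocks B 1 (-1) (-(q • B)) := by
  subst hq
  subst ht
  simp only [Matrix.fromBlocks_multiply, Matrix.fromBlocks_transpose, Matrix.transpose_smul,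
    Matrix.transpose_one, Matrix.transpose_zero, Matrix.transpose_neg, hB, hH,
    Matrix.mul_one, Matrix.one_mul, Matrix.mul_zero, Matrix.zero_mul, add_zero, zero_add,
    Matrix.smul_mul, Matrix.mul_smul, neg_smul, smul_neg, neg_neg]
  rw [Matrix.fromBlocks_inj]
  refine ⟨?_, ?_, ?_, ?_⟩
  all_goals
    simp only [Matrix.transpose_add, Matrix.transpose_mul, Matrix.transpose_smul,
      Matrix.transpose_neg, Matrix.transpose_one, hB, hH,
      mul_add, add_mul, mul_sub, sub_mul, mul_one, one_mul, mul_neg, neg_mul,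
      smul_mul_assoc, mul_smul_comm, mul_assoc, smul_smul, smul_add, smul_sub, smul_neg,
      neg_neg, neg_add, neg_sub, sub_neg_eq_add,
      hBR, hBR0, hRB, hRB0, hBR', hBR'0, hR'B, hR'B0, hR'R, hR'R0, hRR', hRR'0]
  all_goals match_scalars
  all_goals field_simp
  all_goals ring


/-- The Boris splitting one-step matrix `Ψ = K · Φ · K` preserves the
modified structure matrix `Ω_B(τ) = [B, I; −I, −(τ²/4)B]`. -/
theorem stmt_4 (d : ℕ) (B H : Matrix (Fin d) (Fin d) ℝ) (hB : Bᵀ = -B) (hH : Hᵀ = H)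
    (τ : ℝ) (hτ : 0 < τ) (hinv : IsUnit (1 + (τ / 2) • B)) :
    (Matrix.fromBlocks 1 ((τ / 2) • (1 : Matrix (Fin d) (Fin d) ℝ)) 0 1 *
        (Matrix.fromBlocks 1 0 (-(τ / 2) • H) 1 *
          Matrix.fromBlocks 1 0 0 ((1 + (τ / 2) • B)⁻¹ * (1 - (τ / 2) • B)) *
          Matrix.fromBlocks 1 0 (-(τ / 2) • H) 1) *
        Matrix.fromBlocks 1 ((τ / 2) • (1 : Matrix (Fin d) (Fin d) ℝ)) 0 1)ᵀ *
      Matrix.fromBlocks B 1 (-1) (-((τ ^ 2 / 4) • B)) *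
      (Matrix.fromBlocks 1 ((τ / 2) • (1 : Matrix (Fin d) (Fin d) ℝ)) 0 1 *
        (Matrix.fromBlocks 1 0 (-(τ / 2) • H) 1 *
          Matrix.fromBlocks 1 0 0 ((1 + (τ / 2) • B)⁻¹ * (1 - (τ / 2) • B)) *
          Matrix.fromBlocks 1 0 (-(τ / 2) • H) 1) *
        Matrix.fromBlocks 1 ((τ / 2) • (1 : Matrix (Fin d) (Fin d) ℝ)) 0 1) =
    Matrix.fromBlocks B 1 (-1) (-((τ ^ 2 / 4) • B)) := by
  have hs0 : (τ / 2 : ℝ) ≠ 0 := by positivity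
  set s : ℝ := τ / 2 with hsdef
  set A : Matrix (Fin d) (Fin d) ℝ := 1 + s • B with hAdef
  set C : Matrix (Fin d) (Fin d) ℝ := 1 - s • B with hCdef
  set R : Matrix (Fin d) (Fin d) ℝ := A⁻¹ * C with hRdef
  have hdetA : IsUnit A.det := (Matrix.isUnit_iff_isUnit_det A).mp hinv
  have hAi : A * A⁻¹ = 1 := Matrix.mul_nonsing_inv A hdetA
  have hiA : A⁻¹ * A = 1 := Matrix.nonsing_inv_mul A hdetA
  have hAT : Aᵀ = C := by
    rw [hAdef, hCdef, transpose_add, transpose_one, transpose_smul, hB, smul_neg,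
      sub_eq_add_neg]
  have hCT : Cᵀ = A := by
    rw [hCdef, hAdef, transpose_sub, transpose_one, transpose_smul, hB, smul_neg, sub_neg_eq_add]
  have hdetC : IsUnit C.det := by rw [← hAT, Matrix.det_transpose]; exact hdetA
  have hCi : C * C⁻¹ = 1 := Matrix.mul_nonsing_inv C hdetC
  have hiC : C⁻¹ * C = 1 := Matrix.nonsing_inv_mul C hdetC
  have hAC : A * C = C * A := by
    rw [hAdef, hCdef]
    simp only [mul_add, add_mul, mul_sub, sub_mul, mul_one, one_mul, mul_smul_comm,
      smul_mul_assoc]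
    module
  have hBA : B * A = A * B := by
    rw [hAdef]
    simp [mul_add, add_mul, mul_smul_comm, smul_mul_assoc]
  have hBC : B * C = C * B := by
    rw [hCdef]
    simp [mul_sub, sub_mul, mul_smul_comm, smul_mul_assoc]
  have hBiA : B * A⁻¹ = A⁻¹ * B := comm_nonsing_inv A B hdetA hBA
  have hBiC : B * C⁻¹ = C⁻¹ * B := comm_nonsing_inv C B hdetC hBC
  have hiCA : C⁻¹ * A⁻¹ = A⁻¹ * C⁻¹ := by
    rw [← Matrix.mul_inv_rev, hAC, Matrix.mul_inv_rev]
  have hRT : Rᵀ = A * C⁻¹ := by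
    rw [hRdef, transpose_mul, Matrix.transpose_nonsing_inv, hAT, hCT]
  -- Cayley relations
  have hAR : A * R = C := by rw [hRdef, ← mul_assoc, hAi, one_mul]
  have hCR' : C * Rᵀ = A := by rw [hRT, ← mul_assoc, ← hAC, mul_assoc, hCi, mul_one]
  have hRR'0 : R * Rᵀ = 1 := by
    rw [hRdef, hRT, mul_assoc, ← mul_assoc C A, ← hAC, mul_assoc, hCi, mul_one, hiA]
  have hR'R0 : Rᵀ * R = 1 := by
    rw [hRdef, hRT, mul_assoc, ← mul_assoc C⁻¹ A⁻¹, hiCA, mul_assoc, hiC, mul_one, hAi]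
  have hRBc : R * B = B * R := by
    rw [hRdef, mul_assoc, ← hBC, ← mul_assoc, ← hBiA, mul_assoc]
  have hR'Bc : Rᵀ * B = B * Rᵀ := by
    rw [hRT, mul_assoc, ← hBiC, ← mul_assoc, ← hBA, mul_assoc]
  -- scalar-form relations
  have hsBR : s • (B * R) = 1 - s • B - R := by
    have e : R + s • (B * R) = 1 - s • B := by
      have e2 := hAR
      rw [hAdef, add_mul, one_mul, smul_mul_assoc, hCdef] at e2
      rw [← hCdef] at e2 ⊢
      exact e2
    rw [← e]; abel
  have hsBR' : s • (B * Rᵀ) = Rᵀ - 1 - s • B := by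
    have e : Rᵀ - s • (B * Rᵀ) = 1 + s • B := by
      have e2 := hCR'
      rw [hCdef, sub_mul, one_mul, smul_mul_assoc, hAdef] at e2
      rw [← hAdef] at e2 ⊢
      exact e2
    rw [sub_sub, ← e]; abel
  have hBR0 : B * R = s⁻¹ • (1 : Matrix (Fin d) (Fin d) ℝ) - B - s⁻¹ • R := by
    have : B * R = s⁻¹ • (s • (B * R)) := by
      rw [smul_smul, inv_mul_cancel₀ hs0, one_smul]
    rw [this, hsBR, smul_sub, smul_sub, smul_smul, inv_mul_cancel₀ hs0, one_smul]
  have hBR'0 : B * Rᵀ = s⁻¹ • Rᵀ - s⁻¹ • (1 : Matrix (Fin d) (Fin d) ℝ) - B := by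
    have : B * Rᵀ = s⁻¹ • (s • (B * Rᵀ)) := by
      rw [smul_smul, inv_mul_cancel₀ hs0, one_smul]
    rw [this, hsBR', smul_sub, smul_sub, smul_smul, inv_mul_cancel₀ hs0, one_smul]
  have hRB0 : R * B = s⁻¹ • (1 : Matrix (Fin d) (Fin d) ℝ) - B - s⁻¹ • R := by
    rw [hRBc]; exact hBR0
  have hR'B0 : Rᵀ * B = s⁻¹ • Rᵀ - s⁻¹ • (1 : Matrix (Fin d) (Fin d) ℝ) - B := by
    rw [hR'Bc]; exact hBR'0
  -- parametrized versions
  have hBR : ∀ X : Matrix (Fin d) (Fin d) ℝ,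
      B * (R * X) = s⁻¹ • X - B * X - s⁻¹ • (R * X) := by
    intro X
    rw [← mul_assoc, hBR0, sub_mul, sub_mul, smul_mul_assoc, smul_mul_assoc, one_mul, mul_assoc]
  have hRB : ∀ X : Matrix (Fin d) (Fin d) ℝ,
      R * (B * X) = s⁻¹ • X - B * X - s⁻¹ • (R * X) := by
    intro X
    rw [← mul_assoc, hRB0, sub_mul, sub_mul, smul_mul_assoc, smul_mul_assoc, one_mul, mul_assoc]
  have hBR' : ∀ X : Matrix (Fin d) (Fin d) ℝ,
      B * (Rᵀ * X) = s⁻¹ • (Rᵀ * X) - s⁻¹ • X - B * X := by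
    intro X
    rw [← mul_assoc, hBR'0, sub_mul, sub_mul, smul_mul_assoc, smul_mul_assoc, one_mul]
  have hR'B : ∀ X : Matrix (Fin d) (Fin d) ℝ,
      Rᵀ * (B * X) = s⁻¹ • (Rᵀ * X) - s⁻¹ • X - B * X := by
    intro X
    rw [← mul_assoc, hR'B0, sub_mul, sub_mul, smul_mul_assoc, smul_mul_assoc, one_mul]
  have hR'R : ∀ X : Matrix (Fin d) (Fin d) ℝ, Rᵀ * (R * X) = X := by
    intro X; rw [← mul_assoc, hR'R0, one_mul]
  have hRR' : ∀ X : Matrix (Fin d) (Fin d) ℝ, R * (Rᵀ * X) = X := by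
    intro X; rw [← mul_assoc, hRR'0, one_mul]
  exact boris_aux d B H R hB hH s s⁻¹ (τ ^ 2 / 4) hs0 (by rw [hsdef]; ring) rfl
    hBR hBR0 hRB hRB0 hBR' hBR'0 hR'B hR'B0 hR'R hR'R0 hRR' hRR'0
end

section
/- Let h : ℝ^{2d} → ℂ be measurable with |h(w)| ≤ c₁·exp(c₂·‖w‖) for all w, where c₁, c₂ > 0. For any z ∈ ℝ^{2d} and any real 2d×2d matrix Y, define the Gaussian average ⟨h⟩(z, Y) = (2π)^{−d} ∫_{ℝ^{2d}} h(Yζ + z)·exp(−½ζᵀζ) dζ. Then |⟨h⟩(z, Y)| ≤ c₁·C_d·exp((c₂²/2)‖Y‖² + c₂‖z‖)·(c₂^{2d−1}‖Y‖^{2d−1} + 1), where C_d > 0 depends only on d and ‖Y‖ denotes the operator norm. -/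
open MeasureTheory Real Matrix Set

open Set in

private lemma aux_sup (k : ℕ) (t : ℝ) :
    |t| ^ k * Real.exp (-(1/4) * t ^ 2) ≤ (Nat.factorial k : ℝ) * 4 ^ k + 1 := by
  have hk : (0:ℝ) ≤ (Nat.factorial k : ℝ) * 4 ^ k := by positivity
  rcases le_or_gt |t| 1 with ht | ht
  · have h1 : |t| ^ k ≤ 1 := pow_le_one₀ (abs_nonneg t) ht
    have h2 : Real.exp (-(1/4) * t ^ 2) ≤ 1 := by
      rw [Real.exp_le_one_iff]; nlinarith [sq_nonneg t]
    nlinarith [Real.exp_pos (-(1/4) * t ^ 2), pow_nonneg (abs_nonneg t) k]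
  · have h1 : |t| ^ k ≤ (t ^ 2 / 4) ^ k * 4 ^ k := by
      have : |t| ^ k ≤ (t ^ 2) ^ k := by
        apply pow_le_pow_left₀ (abs_nonneg t)
        nlinarith [sq_abs t]
      calc |t| ^ k ≤ (t ^ 2) ^ k := this
        _ = (t ^ 2 / 4) ^ k * 4 ^ k := by rw [div_pow, div_mul_cancel₀]; positivity
    have h2 : (t ^ 2 / 4) ^ k ≤ (Nat.factorial k : ℝ) * Real.exp (t ^ 2 / 4) := by
      have := Real.pow_div_factorial_le_exp (x := t ^ 2 / 4) (by positivity) k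
      have hk' : (0:ℝ) < (Nat.factorial k : ℝ) := by positivity
      rw [div_le_iff₀ hk'] at this
      linarith [this]
    calc |t| ^ k * Real.exp (-(1/4) * t ^ 2)
        ≤ ((Nat.factorial k : ℝ) * Real.exp (t ^ 2 / 4) * 4 ^ k) * Real.exp (-(1/4) * t ^ 2) := by
          have := Real.exp_pos (-(1/4) * t ^ 2)
          have h3 : |t| ^ k ≤ (Nat.factorial k : ℝ) * Real.exp (t ^ 2 / 4) * 4 ^ k := by
            calc |t| ^ k ≤ (t ^ 2 / 4) ^ k * 4 ^ k := h1
              _ ≤ (Nat.factorial k : ℝ) * Real.exp (t ^ 2 / 4) * 4 ^ k := by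
                  apply mul_le_mul_of_nonneg_right h2 (by positivity)
          exact mul_le_mul_of_nonneg_right h3 this.le
      _ = (Nat.factorial k : ℝ) * 4 ^ k * (Real.exp (t ^ 2 / 4) * Real.exp (-(1/4) * t ^ 2)) := by ring
      _ = (Nat.factorial k : ℝ) * 4 ^ k := by
          rw [← Real.exp_add, show t ^ 2 / 4 + -(1/4) * t ^ 2 = 0 by ring, Real.exp_zero, mul_one]
      _ ≤ (Nat.factorial k : ℝ) * 4 ^ k + 1 := by linarith

private lemma aux_addpow (k : ℕ) {x y : ℝ} (hx : 0 ≤ x) (hy : 0 ≤ y) :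
    (x + y) ^ k ≤ 2 ^ k * (x ^ k + y ^ k) := by
  have h1 : x + y ≤ 2 * max x y := by
    rcases le_total x y with h | h
    · simp [max_eq_right h]; linarith
    · simp [max_eq_left h]; linarith
  calc (x + y) ^ k ≤ (2 * max x y) ^ k := pow_le_pow_left₀ (by positivity) h1 k
    _ = 2 ^ k * (max x y) ^ k := mul_pow 2 _ k
    _ ≤ 2 ^ k * (x ^ k + y ^ k) := by
        apply mul_le_mul_of_nonneg_left _ (by positivity)
        rcases max_cases x y with ⟨h, _⟩ | ⟨h, _⟩ <;> rw [h]
        · nlinarith [pow_nonneg hy k]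
        · nlinarith [pow_nonneg hx k]

private lemma aux_pointwise (k : ℕ) {a r : ℝ} (ha : 0 ≤ a) (hr : 0 ≤ r) :
    r ^ k * Real.exp (a * r - (1/2) * r ^ 2) ≤
      Real.exp (a ^ 2 / 2) * 2 ^ k *
        (a ^ k * Real.exp (-(1/2) * (r - a) ^ 2) +
          ((Nat.factorial k : ℝ) * 4 ^ k + 1) * Real.exp (-(1/4) * (r - a) ^ 2)) := by
  have hsplit : Real.exp (a * r - (1/2) * r ^ 2)
      = Real.exp (a ^ 2 / 2) * Real.exp (-(1/2) * (r - a) ^ 2) := by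
    rw [← Real.exp_add]; congr 1; ring
  have hrk : r ^ k ≤ 2 ^ k * (a ^ k + |r - a| ^ k) := by
    calc r ^ k ≤ (a + |r - a|) ^ k := by
          apply pow_le_pow_left₀ hr
          cases abs_cases (r - a) with
          | inl h => linarith [h.1]
          | inr h => linarith [h.1]
      _ ≤ 2 ^ k * (a ^ k + |r - a| ^ k) := aux_addpow k ha (abs_nonneg _)
  have habs : |r - a| ^ k * Real.exp (-(1/2) * (r - a) ^ 2) ≤
      ((Nat.factorial k : ℝ) * 4 ^ k + 1) * Real.exp (-(1/4) * (r - a) ^ 2) := by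
    have h1 : Real.exp (-(1/2) * (r - a) ^ 2)
        = Real.exp (-(1/4) * (r - a) ^ 2) * Real.exp (-(1/4) * (r - a) ^ 2) := by
      rw [← Real.exp_add]; congr 1; ring
    rw [h1, ← mul_assoc]
    exact mul_le_mul_of_nonneg_right (aux_sup k (r - a)) (Real.exp_pos _).le
  calc r ^ k * Real.exp (a * r - (1/2) * r ^ 2)
      = (r ^ k * Real.exp (-(1/2) * (r - a) ^ 2)) * Real.exp (a ^ 2 / 2) := by
        rw [hsplit]; ring
    _ ≤ ((2 ^ k * (a ^ k + |r - a| ^ k)) * Real.exp (-(1/2) * (r - a) ^ 2)) *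
          Real.exp (a ^ 2 / 2) := by
        apply mul_le_mul_of_nonneg_right
          (mul_le_mul_of_nonneg_right hrk (Real.exp_pos _).le) (Real.exp_pos _).le
    _ = (a ^ k * Real.exp (-(1/2) * (r - a) ^ 2) +
          |r - a| ^ k * Real.exp (-(1/2) * (r - a) ^ 2)) * (Real.exp (a ^ 2 / 2) * 2 ^ k) := by
        ring
    _ ≤ (a ^ k * Real.exp (-(1/2) * (r - a) ^ 2) +
          ((Nat.factorial k : ℝ) * 4 ^ k + 1) * Real.exp (-(1/4) * (r - a) ^ 2)) *
          (Real.exp (a ^ 2 / 2) * 2 ^ k) := by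
        apply mul_le_mul_of_nonneg_right _ (by positivity)
        linarith [habs]
    _ = _ := by ring

open Set in
private lemma aux_int (k : ℕ) {a : ℝ} (ha : 0 ≤ a) :
    ∫ y in Ioi (0:ℝ), y ^ k * Real.exp (a * y - (1/2) * y ^ 2) ≤
      Real.exp (a ^ 2 / 2) * 2 ^ k *
        (a ^ k * Real.sqrt (π / (1/2)) +
          ((Nat.factorial k : ℝ) * 4 ^ k + 1) * Real.sqrt (π / (1/4))) := by
  set B : ℝ := (Nat.factorial k : ℝ) * 4 ^ k + 1 with hB
  have hB0 : 0 ≤ B := by positivity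
  have hI2 : Integrable (fun y : ℝ => Real.exp (-(1/2) * (y - a) ^ 2)) :=
    (integrable_exp_neg_mul_sq (by norm_num : (0:ℝ) < 1/2)).comp_sub_right a
  have hI4 : Integrable (fun y : ℝ => Real.exp (-(1/4) * (y - a) ^ 2)) :=
    (integrable_exp_neg_mul_sq (by norm_num : (0:ℝ) < 1/4)).comp_sub_right a
  set G : ℝ → ℝ := fun y => Real.exp (a ^ 2 / 2) * 2 ^ k *
      (a ^ k * Real.exp (-(1/2) * (y - a) ^ 2) + B * Real.exp (-(1/4) * (y - a) ^ 2)) with hG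
  have hGint : Integrable G := ((hI2.const_mul _).add (hI4.const_mul _)).const_mul _
  have h1 : ∫ y in Ioi (0:ℝ), y ^ k * Real.exp (a * y - (1/2) * y ^ 2) ≤
      ∫ y in Ioi (0:ℝ), G y := by
    apply integral_mono_of_nonneg
    · filter_upwards [ae_restrict_mem measurableSet_Ioi] with y hy
      have : (0:ℝ) < y := hy
      positivity
    · exact hGint.integrableOn
    · filter_upwards [ae_restrict_mem measurableSet_Ioi] with y hy
      exact aux_pointwise k ha (le_of_lt hy)
  have h2 : ∫ y in Ioi (0:ℝ), G y ≤ ∫ y, G y := by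
    apply setIntegral_le_integral hGint
    filter_upwards with y
    positivity
  have h3 : ∫ y, G y = Real.exp (a ^ 2 / 2) * 2 ^ k *
      (a ^ k * Real.sqrt (π / (1/2)) + B * Real.sqrt (π / (1/4))) := by
    rw [hG]
    rw [integral_const_mul]
    congr 1
    rw [integral_add (hI2.const_mul _) (hI4.const_mul _), integral_const_mul, integral_const_mul]
    have e2 : ∫ y : ℝ, Real.exp (-(1/2) * (y - a) ^ 2) = Real.sqrt (π / (1/2)) := by
      rw [integral_sub_right_eq_self (fun y : ℝ => Real.exp (-(1/2) * y ^ 2)) a]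
      exact integral_gaussian (1/2)
    have e4 : ∫ y : ℝ, Real.exp (-(1/4) * (y - a) ^ 2) = Real.sqrt (π / (1/4)) := by
      rw [integral_sub_right_eq_self (fun y : ℝ => Real.exp (-(1/4) * y ^ 2)) a]
      exact integral_gaussian (1/4)
    rw [e2, e4]
  linarith [h1, h2, h3.le, h3.ge]

/-- boundedness of the Gaussian average
`⟨h⟩(z,Y) = (2π)^{−d} ∫ h(Yζ+z) e^{−½ζᵀζ} dζ` for symbols of at most
exponential growth, with constant `C_d` depending only on `d`. -/
theorem stmt_6 (d : ℕ) (hd : 1 ≤ d) :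
    ∃ C : ℝ, 0 < C ∧
      ∀ (h : EuclideanSpace ℝ (Fin (2 * d)) → ℂ) (c₁ c₂ : ℝ), 0 < c₁ → 0 < c₂ →
        Measurable h →
        (∀ w : EuclideanSpace ℝ (Fin (2 * d)), ‖h w‖ ≤ c₁ * Real.exp (c₂ * ‖w‖)) →
        ∀ (z : EuclideanSpace ℝ (Fin (2 * d))) (Y : Matrix (Fin (2 * d)) (Fin (2 * d)) ℝ),
          ‖((2 * Real.pi) ^ d)⁻¹ •
              ∫ ζ : EuclideanSpace ℝ (Fin (2 * d)),
                Real.exp (-(1 / 2) * ‖ζ‖ ^ 2) •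
                  h ((WithLp.equiv 2 (Fin (2 * d) → ℝ)).symm
                      (Y.mulVec ((WithLp.equiv 2 (Fin (2 * d) → ℝ)) ζ)) + z)‖ ≤
            c₁ * C *
              Real.exp (c₂ ^ 2 / 2 * ‖Matrix.toEuclideanCLM (𝕜 := ℝ) Y‖ ^ 2 + c₂ * ‖z‖) *
              (c₂ ^ (2 * d - 1) * ‖Matrix.toEuclideanCLM (𝕜 := ℝ) Y‖ ^ (2 * d - 1) + 1) := by
  classical
  set E := EuclideanSpace ℝ (Fin (2 * d)) with hE
  haveI : Nontrivial E := by
    have : 0 < 2 * d := by omega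
    haveI : NeZero (2 * d) := ⟨by omega⟩
    infer_instance
  set k : ℕ := 2 * d - 1 with hk
  set B : ℝ := (Nat.factorial k : ℝ) * 4 ^ k + 1 with hB
  have hB0 : (0:ℝ) < B := by positivity
  set vol : ℝ := (volume (Metric.ball (0:E) 1)).toReal with hvol
  have hvol0 : 0 < vol := by
    rw [hvol]
    apply ENNReal.toReal_pos
    · exact (Metric.measure_ball_pos volume 0 one_pos).ne'
    · exact measure_ball_lt_top.ne
  set s2 : ℝ := Real.sqrt (π / (1/2)) with hs2
  set s4 : ℝ := Real.sqrt (π / (1/4)) with hs4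
  have hs20 : 0 < s2 := Real.sqrt_pos.2 (by positivity)
  have hs40 : 0 < s4 := Real.sqrt_pos.2 (by positivity)
  refine ⟨((2 * π) ^ d)⁻¹ * ((2 * d : ℕ) * vol * 2 ^ k * (s2 + B * s4)), by positivity, ?_⟩
  intro h c₁ c₂ hc₁ hc₂ hmeas hbound z Y
  set A : ℝ := ‖Matrix.toEuclideanCLM (𝕜 := ℝ) Y‖ with hA
  have hA0 : 0 ≤ A := norm_nonneg _
  have ha0 : 0 ≤ c₂ * A := by positivity
  -- pointwise bound on the integrand
  have hptw : ∀ ζ : E,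
      ‖Real.exp (-(1 / 2) * ‖ζ‖ ^ 2) •
          h ((WithLp.equiv 2 (Fin (2 * d) → ℝ)).symm
              (Y.mulVec ((WithLp.equiv 2 (Fin (2 * d) → ℝ)) ζ)) + z)‖ ≤
        c₁ * Real.exp (c₂ * ‖z‖) * Real.exp (c₂ * A * ‖ζ‖ - (1/2) * ‖ζ‖ ^ 2) := by
    intro ζ
    have hYe : (WithLp.equiv 2 (Fin (2 * d) → ℝ)).symm
        (Y.mulVec ((WithLp.equiv 2 (Fin (2 * d) → ℝ)) ζ)) =
        Matrix.toEuclideanCLM (𝕜 := ℝ) Y ζ := rfl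
    rw [norm_smul, Real.norm_eq_abs, abs_of_pos (Real.exp_pos _), hYe]
    have h1 : ‖h (Matrix.toEuclideanCLM (𝕜 := ℝ) Y ζ + z)‖ ≤
        c₁ * Real.exp (c₂ * (A * ‖ζ‖ + ‖z‖)) := by
      refine le_trans (hbound _) ?_
      apply mul_le_mul_of_nonneg_left _ hc₁.le
      apply Real.exp_le_exp.2
      apply mul_le_mul_of_nonneg_left _ hc₂.le
      exact le_trans (norm_add_le _ _)
        (add_le_add_left ((Matrix.toEuclideanCLM (𝕜 := ℝ) Y).le_opNorm ζ) _)
    calc Real.exp (-(1 / 2) * ‖ζ‖ ^ 2) * ‖h (Matrix.toEuclideanCLM (𝕜 := ℝ) Y ζ + z)‖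
        ≤ Real.exp (-(1 / 2) * ‖ζ‖ ^ 2) * (c₁ * Real.exp (c₂ * (A * ‖ζ‖ + ‖z‖))) :=
          mul_le_mul_of_nonneg_left h1 (Real.exp_pos _).le
      _ = c₁ * Real.exp (c₂ * ‖z‖) * Real.exp (c₂ * A * ‖ζ‖ - (1/2) * ‖ζ‖ ^ 2) := by
          rw [mul_left_comm, ← Real.exp_add, mul_assoc, ← Real.exp_add]
          congr 2
          ring
  -- integrability of the dominating function
  have hbase : Integrable (fun ζ : E => Real.exp (-(1/4) * ‖ζ‖ ^ 2)) := by
    have h0 := (GaussianFourier.integrable_cexp_neg_mul_sq_norm_add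
      (V := E) (b := (1/4 : ℂ)) (by norm_num) 0 0).norm
    apply h0.congr
    filter_upwards with v
    simp [Complex.norm_exp, ← Complex.ofReal_pow]
  have hgint : Integrable (fun ζ : E => Real.exp (c₂ * A * ‖ζ‖ - (1/2) * ‖ζ‖ ^ 2)) := by
    apply Integrable.mono' (hbase.const_mul (Real.exp ((c₂ * A) ^ 2)))
    · exact Measurable.aestronglyMeasurable (by fun_prop)
    · filter_upwards with ζ
      rw [Real.norm_eq_abs, abs_of_pos (Real.exp_pos _), ← Real.exp_add]
      exact Real.exp_le_exp.2 (by nlinarith [sq_nonneg (c₂ * A - ‖ζ‖ / 2), norm_nonneg ζ])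
  have step1 : ‖((2 * π) ^ d)⁻¹ •
      ∫ ζ : E, Real.exp (-(1 / 2) * ‖ζ‖ ^ 2) •
        h ((WithLp.equiv 2 (Fin (2 * d) → ℝ)).symm
            (Y.mulVec ((WithLp.equiv 2 (Fin (2 * d) → ℝ)) ζ)) + z)‖ ≤
      ((2 * π) ^ d)⁻¹ * (c₁ * Real.exp (c₂ * ‖z‖) *
        ∫ ζ : E, Real.exp (c₂ * A * ‖ζ‖ - (1/2) * ‖ζ‖ ^ 2)) := by
    rw [norm_smul, Real.norm_eq_abs, abs_of_pos (by positivity)]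
    apply mul_le_mul_of_nonneg_left _ (by positivity)
    refine (norm_integral_le_integral_norm _).trans ?_
    rw [← integral_const_mul]
    exact integral_mono_of_nonneg (Filter.Eventually.of_forall fun ζ => norm_nonneg _)
      (hgint.const_mul _) (Filter.Eventually.of_forall hptw)
  have step2 : ∫ ζ : E, Real.exp (c₂ * A * ‖ζ‖ - (1/2) * ‖ζ‖ ^ 2)
      = (2 * d : ℕ) * vol * ∫ y in Ioi (0:ℝ), y ^ k * Real.exp (c₂ * A * y - (1/2) * y ^ 2) := by
    have hp := MeasureTheory.integral_fun_norm_addHaar (volume : Measure E)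
        (fun r => Real.exp (c₂ * A * r - (1/2) * r ^ 2))
    rw [hp, finrank_euclideanSpace_fin]
    rw [← hk, measureReal_def, ← hvol]
    simp only [nsmul_eq_mul, smul_eq_mul]
    push_cast
    ring
  have hJ : ∫ y in Ioi (0:ℝ), y ^ k * Real.exp (c₂ * A * y - (1/2) * y ^ 2) ≤
      Real.exp ((c₂ * A) ^ 2 / 2) * 2 ^ k * ((s2 + B * s4) * ((c₂ * A) ^ k + 1)) := by
    refine (aux_int k ha0).trans ?_
    apply mul_le_mul_of_nonneg_left _ (by positivity)
    simp only [← hs2, ← hs4, ← hB]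
    nlinarith [pow_nonneg ha0 k, hs20.le, hs40.le, hB0.le,
      mul_nonneg (mul_nonneg hB0.le hs40.le) (pow_nonneg ha0 k)]
  rw [step2] at step1
  calc ‖((2 * π) ^ d)⁻¹ •
      ∫ ζ : E, Real.exp (-(1 / 2) * ‖ζ‖ ^ 2) •
        h ((WithLp.equiv 2 (Fin (2 * d) → ℝ)).symm
            (Y.mulVec ((WithLp.equiv 2 (Fin (2 * d) → ℝ)) ζ)) + z)‖
      ≤ ((2 * π) ^ d)⁻¹ * (c₁ * Real.exp (c₂ * ‖z‖) * ((2 * d : ℕ) * vol *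
          ∫ y in Ioi (0:ℝ), y ^ k * Real.exp (c₂ * A * y - (1/2) * y ^ 2))) := step1
    _ ≤ ((2 * π) ^ d)⁻¹ * (c₁ * Real.exp (c₂ * ‖z‖) * ((2 * d : ℕ) * vol *
          (Real.exp ((c₂ * A) ^ 2 / 2) * 2 ^ k * ((s2 + B * s4) * ((c₂ * A) ^ k + 1))))) := by
        gcongr
    _ = c₁ * (((2 * π) ^ d)⁻¹ * ((2 * d : ℕ) * vol * 2 ^ k * (s2 + B * s4))) *
          Real.exp (c₂ ^ 2 / 2 * A ^ 2 + c₂ * ‖z‖) * (c₂ ^ k * A ^ k + 1) := by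
        rw [Real.exp_add, show c₂ ^ 2 / 2 * A ^ 2 = (c₂ * A) ^ 2 / 2 by ring, ← mul_pow]
        ring
end

section
/- Let M₁,…,M_s be D×D matrices, L a strictly lower triangular s×s matrix, b ∈ ℝ^s, M = diag(M₁,…,M_s), and A = M(Lᵀ ⊗ I_D). Then for every k ≥ 1 and every block index i ∈ {1,…,s}, the i-th D×D block of A^{k−1} M (b ⊗ I_D) equals Σ over index chains i = j₁ < j₂ < ⋯ < j_k ≤ s of M_{j₁}M_{j₂}⋯M_{j_k} · b_{j_k} · Π_{ℓ=1}^{k−1} L_{j_{ℓ+1} j_ℓ}. -/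
open Matrix Kronecker

/-- Block diagonal matrix with blocks `M 1, …, M s`, indexed by `Fin s × Fin D`. -/
def blockDiagMat' (s D : ℕ) (M : Fin s → Matrix (Fin D) (Fin D) ℝ) :
    Matrix (Fin s × Fin D) (Fin s × Fin D) ℝ :=
  Matrix.of fun p q => if p.1 = q.1 then M p.1 p.2 q.2 else 0

/-- The `sD × D` matrix `b ⊗ I_D`. -/
def bKronId (s D : ℕ) (b : Fin s → ℝ) : Matrix (Fin s × Fin D) (Fin D) ℝ :=
  Matrix.of fun p j => b p.1 * (if p.2 = j then 1 else 0)

lemma aux_strictMono_cons_iff {n s : ℕ} (i : Fin s) (f : Fin (n + 1) → Fin s) :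
    StrictMono (Fin.cons i f : Fin (n + 2) → Fin s) ↔ i < f 0 ∧ StrictMono f := by
  rw [Fin.strictMono_iff_lt_succ, Fin.strictMono_iff_lt_succ]
  constructor
  · intro h
    refine ⟨by simpa using h 0, fun m => ?_⟩
    have := h m.succ
    simpa [← Fin.succ_castSucc] using this
  · rintro ⟨h0, h⟩ l
    induction l using Fin.cases with
    | zero => simpa using h0
    | succ m => simpa [← Fin.succ_castSucc] using h m

lemma aux_A_apply (s D : ℕ) (M : Fin s → Matrix (Fin D) (Fin D) ℝ)
    (L : Matrix (Fin s) (Fin s) ℝ) (i j : Fin s) (r t : Fin D) :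
    (blockDiagMat' s D M * (Lᵀ ⊗ₖ (1 : Matrix (Fin D) (Fin D) ℝ))) (i, r) (j, t) =
      L j i * M i r t := by
  simp [Matrix.mul_apply, blockDiagMat', Fintype.sum_prod_type, Matrix.one_apply,
    mul_comm, mul_ite, ite_mul]

lemma aux_Y_rec (s D : ℕ) (M : Fin s → Matrix (Fin D) (Fin D) ℝ)
    (L : Matrix (Fin s) (Fin s) ℝ) (b : Fin s → ℝ) (n : ℕ) (i : Fin s) :
    (Matrix.of fun (r : Fin D) (c : Fin D) =>
      (((blockDiagMat' s D M * (Lᵀ ⊗ₖ (1 : Matrix (Fin D) (Fin D) ℝ))) ^ (n + 1)) *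
          blockDiagMat' s D M * bKronId s D b) (i, r) c) =
    ∑ j : Fin s, L j i •
      (M i * Matrix.of fun (r : Fin D) (c : Fin D) =>
        (((blockDiagMat' s D M * (Lᵀ ⊗ₖ (1 : Matrix (Fin D) (Fin D) ℝ))) ^ n) *
            blockDiagMat' s D M * bKronId s D b) (j, r) c) := by
  set A := blockDiagMat' s D M * (Lᵀ ⊗ₖ (1 : Matrix (Fin D) (Fin D) ℝ)) with hA
  have h1 : A ^ (n + 1) * blockDiagMat' s D M * bKronId s D b =
      A * (A ^ n * blockDiagMat' s D M * bKronId s D b) := by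
    rw [pow_succ', Matrix.mul_assoc A, Matrix.mul_assoc A]
  ext r c
  rw [Matrix.of_apply, h1, Matrix.mul_apply]
  rw [Fintype.sum_prod_type]
  set X := A ^ n * blockDiagMat' s D M * bKronId s D b with hX
  simp only [hA, aux_A_apply]
  simp only [Matrix.sum_apply, Matrix.smul_apply, smul_eq_mul, Matrix.mul_apply,
    Matrix.of_apply, Finset.mul_sum]
  refine Finset.sum_congr rfl fun j _ => Finset.sum_congr rfl fun t _ => by ring

open Classical in
noncomputable def chainSum (s D : ℕ) (M : Fin s → Matrix (Fin D) (Fin D) ℝ)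
    (L : Matrix (Fin s) (Fin s) ℝ) (b : Fin s → ℝ) (n : ℕ) (i : Fin s) :
    Matrix (Fin D) (Fin D) ℝ :=
  ∑ j : Fin (n + 1) → Fin s,
    if StrictMono j ∧ j 0 = i then
      (b (j (Fin.last n)) * ∏ l : Fin n, L (j l.succ) (j l.castSucc)) •
        (List.ofFn fun l : Fin (n + 1) => M (j l)).prod
    else 0

open Classical in
lemma aux_chain_rec (s D : ℕ) (M : Fin s → Matrix (Fin D) (Fin D) ℝ)
    (L : Matrix (Fin s) (Fin s) ℝ) (hL : ∀ i j : Fin s, i ≤ j → L i j = 0)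
    (b : Fin s → ℝ) (n : ℕ) (i : Fin s) :
    chainSum s D M L b (n + 1) i = ∑ j : Fin s, L j i • (M i * chainSum s D M L b n j) := by
  rw [chainSum]
  rw [← Equiv.sum_comp (Fin.consEquiv (fun _ : Fin (n + 2) => Fin s))]
  rw [Fintype.sum_prod_type]
  -- collapse the first coordinate to i
  have hcoll : ∀ x : Fin s, ∀ f : Fin (n + 1) → Fin s,
      (if StrictMono ((Fin.consEquiv (fun _ : Fin (n + 2) => Fin s)) (x, f)) ∧
          ((Fin.consEquiv (fun _ : Fin (n + 2) => Fin s)) (x, f)) 0 = i then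
        (b (((Fin.consEquiv (fun _ : Fin (n + 2) => Fin s)) (x, f)) (Fin.last (n + 1))) *
            ∏ l : Fin (n + 1),
              L (((Fin.consEquiv (fun _ : Fin (n + 2) => Fin s)) (x, f)) l.succ)
                (((Fin.consEquiv (fun _ : Fin (n + 2) => Fin s)) (x, f)) l.castSucc)) •
          (List.ofFn fun l : Fin (n + 2) =>
            M (((Fin.consEquiv (fun _ : Fin (n + 2) => Fin s)) (x, f)) l)).prod
      else 0) =
      if x = i then
        (if StrictMono (Fin.cons i f : Fin (n + 2) → Fin s) then
          (b (f (Fin.last n)) *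
              (L (f 0) i * ∏ l : Fin n, L (f l.succ) (f l.castSucc))) •
            (M i * (List.ofFn fun l : Fin (n + 1) => M (f l)).prod)
        else 0)
      else 0 := by
    intro x f
    have hc : (Fin.consEquiv fun _ : Fin (n + 2) => Fin s) (x, f) =
        (Fin.cons x f : Fin (n + 2) → Fin s) := rfl
    rw [hc]
    simp only [Fin.cons_zero]
    by_cases hx : x = i
    · subst hx
      simp only [eq_self_iff_true, and_true, if_true]
      by_cases hsm : StrictMono (Fin.cons x f : Fin (n + 2) → Fin s)
      · rw [if_pos hsm, if_pos hsm]
        rw [← Fin.succ_last, Fin.cons_succ, Fin.prod_univ_succ, List.ofFn_succ]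
        simp only [Fin.cons_succ, Fin.cons_zero, Fin.castSucc_zero, Fin.succ_zero_eq_one,
          ← Fin.succ_castSucc, List.prod_cons]
        have h1 : (Fin.cons x f : Fin (n + 2) → Fin s) 1 = f 0 := rfl
        rw [h1]
      · rw [if_neg hsm, if_neg hsm]
    · rw [if_neg hx]
      rw [if_neg]
      rintro ⟨-, h0⟩
      exact hx h0
  simp only [hcoll]
  rw [Finset.sum_comm]
  simp only [Finset.sum_ite_eq', Finset.mem_univ, if_true]
  -- now the right-hand side
  have hrhs : ∀ f : Fin (n + 1) → Fin s,
      (if StrictMono (Fin.cons i f : Fin (n + 2) → Fin s) then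
        (b (f (Fin.last n)) * (L (f 0) i * ∏ l : Fin n, L (f l.succ) (f l.castSucc))) •
          (M i * (List.ofFn fun l : Fin (n + 1) => M (f l)).prod)
      else 0) =
      ∑ j : Fin s, if f 0 = j then
        L j i • (M i *
          (if StrictMono f then
            (b (f (Fin.last n)) * ∏ l : Fin n, L (f l.succ) (f l.castSucc)) •
              (List.ofFn fun l : Fin (n + 1) => M (f l)).prod
          else 0)) else 0 := by
    intro f
    rw [Finset.sum_ite_eq Finset.univ (f 0), if_pos (Finset.mem_univ _)]
    by_cases hsm : StrictMono f
    · by_cases hlt : i < f 0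
      · rw [if_pos ((aux_strictMono_cons_iff i f).mpr ⟨hlt, hsm⟩), if_pos hsm]
        rw [Matrix.mul_smul, smul_smul]
        congr 1
        ring
      · rw [if_neg, if_pos hsm, hL (f 0) i (le_of_not_gt hlt), zero_smul]
        intro h
        exact hlt ((aux_strictMono_cons_iff i f).mp h).1
    · rw [if_neg, if_neg hsm, Matrix.mul_zero, smul_zero]
      intro h
      exact hsm ((aux_strictMono_cons_iff i f).mp h).2
  simp only [hrhs]
  rw [Finset.sum_comm]
  refine Finset.sum_congr rfl fun j _ => ?_
  rw [chainSum, Matrix.mul_sum, Finset.smul_sum]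
  refine Finset.sum_congr rfl fun f _ => ?_
  by_cases h1 : f 0 = j <;> by_cases h2 : StrictMono f <;> simp [h1, h2]


open Classical in
/-- explicit chain expansion of the blocks of `A^{k−1} M (b ⊗ I_D)`
for `A = M (Lᵀ ⊗ I_D)`: the `i`-th `D×D` block equals the sum over strictly
increasing index chains `i = j₁ < ⋯ < j_k ≤ s` of
`M_{j₁}⋯M_{j_k} b_{j_k} ∏_{ℓ} L_{j_{ℓ+1} j_ℓ}` (here `k = n+1 ≥ 1`). -/
theorem stmt_13 (s D : ℕ) (M : Fin s → Matrix (Fin D) (Fin D) ℝ)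
    (L : Matrix (Fin s) (Fin s) ℝ) (hL : ∀ i j : Fin s, i ≤ j → L i j = 0)
    (b : Fin s → ℝ) (n : ℕ) (i : Fin s) :
    (Matrix.of fun (r : Fin D) (c : Fin D) =>
      (((blockDiagMat' s D M * (Lᵀ ⊗ₖ (1 : Matrix (Fin D) (Fin D) ℝ))) ^ n) *
          blockDiagMat' s D M * bKronId s D b) (i, r) c) =
    ∑ j : Fin (n + 1) → Fin s,
      if StrictMono j ∧ j 0 = i then
        (b (j (Fin.last n)) * ∏ l : Fin n, L (j l.succ) (j l.castSucc)) •
          (List.ofFn fun l : Fin (n + 1) => M (j l)).prod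
      else 0 := by
  induction n generalizing i with
  | zero =>
    have hr : (∑ j : Fin 1 → Fin s,
        if StrictMono j ∧ j 0 = i then
          (b (j (Fin.last 0)) * ∏ l : Fin 0, L (j l.succ) (j l.castSucc)) •
            (List.ofFn fun l : Fin 1 => M (j l)).prod
        else 0) = b i • M i := by
      rw [Fintype.sum_equiv (Equiv.funUnique (Fin 1) (Fin s))
        _ (fun x : Fin s => if x = i then b x • M x else 0) ?_]
      · rw [Finset.sum_ite_eq' Finset.univ i, if_pos (Finset.mem_univ i)]
      · intro j
        have hmono : StrictMono j := Subsingleton.strictMono j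
        simp [hmono, Equiv.funUnique, Fin.last]
    rw [hr]
    ext r c
    simp [pow_zero, Matrix.one_mul, Matrix.mul_apply, blockDiagMat', bKronId,
      Fintype.sum_prod_type, Matrix.smul_apply, smul_eq_mul, mul_ite, ite_mul,
      mul_comm]
  | succ n ih =>
    rw [aux_Y_rec]
    simp only [ih]
    exact (aux_chain_rec s D M L hL b n i).symm
end
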